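/- arXiv:1912.03751 — 2 statements merged into one kernel-verified Lean document; each statement's English description precedes it below -/
import Mathlib

section
/- In the quantum matrix algebra ℂ(q)[M_q(3)] (FRT algebra for GL_q(3)), the diagonal generators a = x¹₁, b = x²₂, c = x³₃ satisfy the relation [[a,c],b] = 0, i.e. (ac − ca)b = b(ac − ca). -/
/-- In ℂ(q)[M_q(3)], the diagonal generators a = x¹₁, b = x²₂, c = x³₃ satisfy
[[a,c],b] = 0, i.e. (ac − ca)b = b(ac − ca). -/
theorem mq3_diag_relation
    {F : Type*} [Field F] {A : Type*} [Ring A] [Algebra F A]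
    (q : F) (hq : q ≠ 0)
    (x : Fin 3 → Fin 3 → A)
    (hcol : ∀ i j k : Fin 3, i < j → x j k * x i k = q • (x i k * x j k))
    (hrow : ∀ i j k : Fin 3, i < j → x k j * x k i = q • (x k i * x k j))
    (hdiag : ∀ i j k l : Fin 3, i < j → k < l →
      x j l * x i k = x i k * x j l + (q - q⁻¹) • (x i l * x j k))
    (hanti : ∀ i j k l : Fin 3, i < j → k < l →
      x j k * x i l = x i l * x j k) :
    (x 0 0 * x 2 2 - x 2 2 * x 0 0) * x 1 1 =
      x 1 1 * (x 0 0 * x 2 2 - x 2 2 * x 0 0) := by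
  have h := hdiag 0 2 0 2 (by decide) (by decide)
  have h1 := hanti 0 1 1 2 (by decide) (by decide)
  have h2 := hanti 1 2 0 1 (by decide) (by decide)
  have key : (x 0 2 * x 2 0) * x 1 1 = x 1 1 * (x 0 2 * x 2 0) := by
    rw [mul_assoc, h2, ← mul_assoc, ← h1, mul_assoc]
  rw [h, sub_add_cancel_left, neg_mul, mul_neg, smul_mul_assoc, mul_smul_comm, key]
end

section
/- In H_3(q), the element θ = T₁T₂T₁ acts on the idempotents e±₂₁ by eigenvalue ±1 from both sides: θ·e⁺₂₁ = e⁺₂₁ = e⁺₂₁·θ and θ·e⁻₂₁ = −e⁻₂₁ = e⁻₂₁·θ. -/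
/-- In H₃(q), θ = T₁T₂T₁ acts on e±₂₁ with eigenvalue ±1 from both sides. -/
theorem hecke3_theta_eigen
    {F : Type*} [Field F] [CharZero F] {A : Type*} [Ring A] [Algebra F A]
    (q : F) (hq : q ≠ 0)
    (h3ne : q ^ 2 + 1 + (q⁻¹) ^ 2 ≠ 0)
    (hp1 : q + q⁻¹ + 1 ≠ 0) (hm1 : q + q⁻¹ - 1 ≠ 0)
    (T₁ T₂ : A)
    (h1 : T₁ ^ 2 = 1 + (q - q⁻¹) • T₁)
    (h2 : T₂ ^ 2 = 1 + (q - q⁻¹) • T₂)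
    (hbraid : T₁ * T₂ * T₁ = T₂ * T₁ * T₂)
    (ep em : A)
    (hep : ep =
      (q ^ 2 + 1 + (q⁻¹) ^ 2)⁻¹ •
        ((1 : A) - (2⁻¹ : F) • (T₁ * T₂ + T₁ + T₂ + T₂ * T₁) + T₁ * T₂ * T₁)
      + ((q - q⁻¹) / (2 * (q ^ 2 + 1 + (q⁻¹) ^ 2))) •
        (T₁ - T₂ * T₁ - T₁ * T₂ + T₂))
    (hem : em =
      (q ^ 2 + 1 + (q⁻¹) ^ 2)⁻¹ •
        ((1 : A) - (2⁻¹ : F) • (T₁ * T₂ - T₁ - T₂ + T₂ * T₁) - T₁ * T₂ * T₁)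
      + ((q - q⁻¹) / (2 * (q ^ 2 + 1 + (q⁻¹) ^ 2))) •
        (T₁ + T₂ * T₁ + T₁ * T₂ + T₂))
    (θ : A) (hθ : θ = T₁ * T₂ * T₁) :
    θ * ep = ep ∧ ep * θ = ep ∧ θ * em = -em ∧ em * θ = -em := by
  have hd : (q ^ 2 + 1 + (q⁻¹) ^ 2) ≠ 0 := h3ne
  have h2d : (2 * (q ^ 2 + 1 + (q⁻¹) ^ 2)) ≠ 0 := by
    exact mul_ne_zero two_ne_zero hd
  have w1' : T₁ * T₁ = 1 + (q - q⁻¹) • T₁ := by rw [← sq, h1]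
  have w2' : T₂ * T₂ = 1 + (q - q⁻¹) • T₂ := by rw [← sq, h2]
  have w1 : ∀ x : A, T₁ * (T₁ * x) = x + (q - q⁻¹) • (T₁ * x) := by
    intro x
    rw [← mul_assoc, w1', add_mul, one_mul, smul_mul_assoc]
  have w2 : ∀ x : A, T₂ * (T₂ * x) = x + (q - q⁻¹) • (T₂ * x) := by
    intro x
    rw [← mul_assoc, w2', add_mul, one_mul, smul_mul_assoc]
  have b0 : T₂ * (T₁ * T₂) = T₁ * (T₂ * T₁) := by
    rw [← mul_assoc, ← hbraid, mul_assoc]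
  have b : ∀ x : A, T₂ * (T₁ * (T₂ * x)) = T₁ * (T₂ * (T₁ * x)) := by
    intro x
    calc T₂ * (T₁ * (T₂ * x)) = (T₂ * T₁ * T₂) * x := by rw [mul_assoc, mul_assoc]
    _ = (T₁ * T₂ * T₁) * x := by rw [hbraid]
    _ = T₁ * (T₂ * (T₁ * x)) := by rw [mul_assoc, mul_assoc]
  -- scaled versions of ep, em with polynomial coefficients
  set Ep : A := (2:F) • (1:A) - (T₁ * T₂ + T₁ + T₂ + T₂ * T₁) + (2:F) • (T₁ * T₂ * T₁)
      + (q - q⁻¹) • (T₁ - T₂ * T₁ - T₁ * T₂ + T₂) with hEpdef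
  set Em : A := (2:F) • (1:A) - (T₁ * T₂ - T₁ - T₂ + T₂ * T₁) - (2:F) • (T₁ * T₂ * T₁)
      + (q - q⁻¹) • (T₁ + T₂ * T₁ + T₁ * T₂ + T₂) with hEmdef
  have c1 : (2 * (q ^ 2 + 1 + (q⁻¹) ^ 2)) * (q ^ 2 + 1 + (q⁻¹) ^ 2)⁻¹ = 2 := by
    rw [mul_assoc, mul_inv_cancel₀ hd, mul_one]
  have c2 : (2 * (q ^ 2 + 1 + (q⁻¹) ^ 2)) * ((q - q⁻¹) / (2 * (q ^ 2 + 1 + (q⁻¹) ^ 2)))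
      = q - q⁻¹ := by
    rw [mul_comm]
    exact div_mul_cancel₀ _ h2d
  have hEp : (2 * (q ^ 2 + 1 + (q⁻¹) ^ 2)) • ep = Ep := by
    rw [hep, smul_add, smul_smul, smul_smul, c1, c2, hEpdef]
    congr 1
    rw [smul_add, smul_sub, smul_smul]
    norm_num
  have hEm : (2 * (q ^ 2 + 1 + (q⁻¹) ^ 2)) • em = Em := by
    rw [hem, smul_add, smul_smul, smul_smul, c1, c2, hEmdef]
    congr 1
    rw [smul_sub, smul_sub, smul_smul]
    norm_num
  have cancel : ∀ x y : A, (2 * (q ^ 2 + 1 + (q⁻¹) ^ 2)) • x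
      = (2 * (q ^ 2 + 1 + (q⁻¹) ^ 2)) • y → x = y := by
    intro x y h
    have h' := congrArg (fun z : A => (2 * (q ^ 2 + 1 + (q⁻¹) ^ 2))⁻¹ • z) h
    simp only [inv_smul_smul₀ h2d] at h'
    exact h' 
  have kp1 : θ * Ep = Ep := by
    rw [hθ, hEpdef]
    simp only [mul_add, add_mul, mul_sub, sub_mul, smul_add, smul_sub,
      mul_smul_comm, smul_mul_assoc, smul_smul, mul_one, one_mul, mul_assoc,
      w1, w2, w1', w2', b, b0]
    match_scalars <;> ring
  have kp2 : Ep * θ = Ep := by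
    rw [hθ, hEpdef]
    simp only [mul_add, add_mul, mul_sub, sub_mul, smul_add, smul_sub,
      mul_smul_comm, smul_mul_assoc, smul_smul, mul_one, one_mul, mul_assoc,
      w1, w2, w1', w2', b, b0]
    match_scalars <;> ring
  have km1 : θ * Em = -Em := by
    rw [hθ, hEmdef]
    simp only [mul_add, add_mul, mul_sub, sub_mul, smul_add, smul_sub, neg_add, neg_sub,
      mul_smul_comm, smul_mul_assoc, smul_smul, mul_one, one_mul, mul_assoc,
      w1, w2, w1', w2', b, b0, neg_smul, smul_neg]
    match_scalars <;> ring
  have km2 : Em * θ = -Em := by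
    rw [hθ, hEmdef]
    simp only [mul_add, add_mul, mul_sub, sub_mul, smul_add, smul_sub, neg_add, neg_sub,
      mul_smul_comm, smul_mul_assoc, smul_smul, mul_one, one_mul, mul_assoc,
      w1, w2, w1', w2', b, b0, neg_smul, smul_neg]
    match_scalars <;> ring
  refine ⟨?_, ?_, ?_, ?_⟩
  · exact cancel _ _ (by rw [← mul_smul_comm, hEp, kp1])
  · exact cancel _ _ (by rw [← smul_mul_assoc, hEp, kp2])
  · exact cancel _ _ (by rw [← mul_smul_comm, hEm, km1, smul_neg, hEm])
  · exact cancel _ _ (by rw [← smul_mul_assoc, hEm, km2, smul_neg, hEm])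
end
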